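/- The sixteen matrices M_{a⊗b}, as a and b each range over {1, i, j, k} ⊂ ℍ, form a basis of the real vector space M(4, ℝ) of 4×4 real matrices. -/

import Mathlib

open Matrix

/-- The quaternion units. -/
def qi : Quaternion ℝ := ⟨0, 1, 0, 0⟩
def qj : Quaternion ℝ := ⟨0, 0, 1, 0⟩
def qk : Quaternion ℝ := ⟨0, 0, 0, 1⟩

/-- Coordinates of a quaternion in the basis `{1, i, j, k}` of `ℍ ≅ ℝ⁴`. -/
def qcoord (x : Quaternion ℝ) : Fin 4 → ℝ := ![x.re, x.imI, x.imJ, x.imK]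

/-- The basis `{1, i, j, k}` of `ℍ ≅ ℝ⁴`. -/
noncomputable def qbas : Fin 4 → Quaternion ℝ := ![1, qi, qj, qk]

/-- `M_{p⊗q}` : the matrix of the ℝ-linear map `x ↦ p * x * conj q` on `ℍ ≅ ℝ⁴`
in the basis `{1, i, j, k}`. -/
noncomputable def Mten (p q : Quaternion ℝ) : Matrix (Fin 4) (Fin 4) ℝ :=
  Matrix.of fun i j => qcoord (p * qbas j * star q) i

/-!
With `⟨A, B⟩ = tr (Aᵀ B)`, the sixteen matrices are pairwise orthogonal: `p ⊗ q ↦ M_{p⊗q}` is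
multiplicative, `M_{p⊗q}ᵀ = M_{p̄⊗q̄}` and `tr M_{p⊗q} = 4 Re p Re q`, so
`⟨M_{a⊗b}, M_{c⊗d}⟩ = 4 Re (āc) Re (b̄d) = 4 δ_{ac} δ_{bd}`. Sixteen pairwise orthogonal
nonzero vectors of the 16-dimensional space `M(4, ℝ)` form a basis.
-/

open Quaternion

theorem Matrix.linearIndependent_of_trace_transpose_mul {ι n K : Type*} [Field K] [Fintype n]
    (M : ι → Matrix n n K) (h_ortho : Pairwise fun i j => trace ((M i)ᵀ * M j) = 0)
    (h_ne : ∀ i, trace ((M i)ᵀ * M i) ≠ 0) : LinearIndependent K M := by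
  let B : LinearMap.BilinForm K (Matrix n n K) :=
    LinearMap.mk₂ K (fun X Y => trace (Xᵀ * Y))
      (fun _ _ _ => by simp [add_mul, trace_add]) (fun _ _ _ => by simp)
      (fun _ _ _ => by simp [mul_add, trace_add]) (fun _ _ _ => by simp)
  exact LinearMap.linearIndependent_of_isOrthoᵢ (B := B) (fun i j hij => h_ortho hij) h_ne

namespace Quaternion

variable {R : Type*} [CommRing R]

variable (R) in
noncomputable abbrev basisOneIJK : Module.Basis (Fin 4) R (Quaternion R) :=
  QuaternionAlgebra.basisOneIJK (-1) 0 (-1)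

theorem re_star_mul (x y : Quaternion R) :
    (star x * y).re = x.re * y.re + x.imI * y.imI + x.imJ * y.imJ + x.imK * y.imK := by
  simp only [re_mul, re_star, imI_star, imJ_star, imK_star]
  ring

noncomputable def sandwich (p q : Quaternion R) : Quaternion R →ₗ[R] Quaternion R :=
  LinearMap.mulLeft R p ∘ₗ LinearMap.mulRight R (star q)

theorem sandwich_mul (p q r s : Quaternion R) :
    sandwich (p * r) (q * s) = sandwich p q ∘ₗ sandwich r s := by
  ext x : 1
  simp [sandwich, star_mul, mul_assoc]

end Quaternion

theorem qcoord_eq_repr (x : Quaternion ℝ) : qcoord x = ⇑((basisOneIJK ℝ).repr x) := rfl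

theorem qbas_eq_basisOneIJK : qbas = ⇑(basisOneIJK ℝ) := by
  ext a : 1
  apply (basisOneIJK ℝ).repr.injective
  ext b
  rw [← qcoord_eq_repr]
  fin_cases a <;> fin_cases b <;> simp [qbas, qi, qj, qk, qcoord]

theorem re_star_qbas_mul_qbas (a b : Fin 4) :
    (star (qbas a) * qbas b).re = if a = b then 1 else 0 := by
  rw [re_star_mul]
  fin_cases a <;> fin_cases b <;> simp [qbas, qi, qj, qk]

theorem Mten_eq_toMatrix_sandwich (p q : Quaternion ℝ) :
    Mten p q = LinearMap.toMatrix (basisOneIJK ℝ) (basisOneIJK ℝ) (sandwich p q) := by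
  ext i j
  rw [LinearMap.toMatrix_apply, ← qbas_eq_basisOneIJK]
  simp [Mten, qcoord_eq_repr, sandwich, mul_assoc]

theorem Mten_mul (p q r s : Quaternion ℝ) : Mten p q * Mten r s = Mten (p * r) (q * s) := by
  simp only [Mten_eq_toMatrix_sandwich, sandwich_mul, ← LinearMap.toMatrix_comp]

theorem Mten_transpose (p q : Quaternion ℝ) : (Mten p q)ᵀ = Mten (star p) (star q) := by
  ext i j
  simp only [transpose_apply, Mten, of_apply, qcoord, re_mul, imI_mul, imJ_mul, imK_mul,
    re_star, imI_star, imJ_star, imK_star]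
  fin_cases i <;> fin_cases j <;> simp [qbas, qi, qj, qk] <;> ring

theorem trace_Mten (p q : Quaternion ℝ) : trace (Mten p q) = 4 * p.re * q.re := by
  simp only [trace, Fin.sum_univ_four, diag, Mten, of_apply, qcoord, re_mul, imI_mul, imJ_mul,
    imK_mul, re_star, imI_star, imJ_star, imK_star]
  simp [qbas, qi, qj, qk]
  ring

theorem trace_transpose_Mten_qbas_mul (a b c d : Fin 4) :
    trace ((Mten (qbas a) (qbas b))ᵀ * Mten (qbas c) (qbas d)) =
      if a = c ∧ b = d then 4 else 0 := by
  rw [Mten_transpose, Mten_mul, trace_Mten, re_star_qbas_mul_qbas, re_star_qbas_mul_qbas]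
  split_ifs <;> simp_all

/-- The sixteen matrices `M_{a⊗b}`, `a, b ∈ {1, i, j, k}`, form a basis of the
real vector space of `4 × 4` real matrices. -/
theorem Mten_basis :
    LinearIndependent ℝ (fun ab : Fin 4 × Fin 4 => Mten (qbas ab.1) (qbas ab.2)) ∧
    Submodule.span ℝ
      (Set.range fun ab : Fin 4 × Fin 4 => Mten (qbas ab.1) (qbas ab.2)) = ⊤ := by
  have hli : LinearIndependent ℝ (fun ab : Fin 4 × Fin 4 => Mten (qbas ab.1) (qbas ab.2)) := by
    refine Matrix.linearIndependent_of_trace_transpose_mul _ (fun x y hxy => ?_) (fun x => ?_)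
    · simpa [trace_transpose_Mten_qbas_mul, Prod.ext_iff] using hxy
    · simp [trace_transpose_Mten_qbas_mul]
  exact ⟨hli, hli.span_eq_top_of_card_eq_finrank (by simp [Module.finrank_matrix])⟩
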